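/- arXiv:2510.05393 — 3 statements merged into one kernel-verified Lean document; each statement's English description precedes it below -/
import Mathlib

section
/- Let ρ be a mixed state on an n-qubit system partitioned into m subsystems of local dimensions d₁,…,d_m with ∏ᵢ dᵢ = 2ⁿ. The product test, which performs a swap test on each of the m pairs of corresponding subsystems of two copies of ρ and accepts iff all swap tests succeed, accepts with probability exactly (1/2^m) · Σ_{S⊆[m]} Tr[ρ_S²], where ρ_S is the reduced state of ρ on the subsystems indexed by S. -/
open Matrix
open scoped ComplexOrder Kronecker

/-- A density matrix: positive semidefinite with unit trace. -/
def IsDensityMatrix {n : Type*} [Fintype n] (ρ : Matrix n n ℂ) : Prop :=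
  ρ.PosSemidef ∧ ρ.trace = 1

/-- The reduced state `ρ_S` of a state `ρ` on `⨂ i, ℂ^{d i}`, obtained by tracing out the
subsystems outside `S`. -/
noncomputable def reducedState {m : ℕ} {d : Fin m → ℕ}
    (ρ : Matrix (∀ i, Fin (d i)) (∀ i, Fin (d i)) ℂ) (S : Finset (Fin m)) :
    Matrix (∀ i : {i // i ∈ S}, Fin (d i)) (∀ i : {i // i ∈ S}, Fin (d i)) ℂ :=
  fun a b => ∑ c : ∀ i : {i // i ∈ Sᶜ}, Fin (d i),
    ρ (fun i => if h : i ∈ S then a ⟨i, h⟩ else c ⟨i, Finset.mem_compl.mpr h⟩)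
      (fun i => if h : i ∈ S then b ⟨i, h⟩ else c ⟨i, Finset.mem_compl.mpr h⟩)

/-- The measurement operator of the product test acting on two copies: on each subsystem `i`
it applies the projector `(I + SWAPᵢ)/2` onto the symmetric subspace of the pair of
corresponding subsystems of the two copies; the test accepts iff all `m` swap tests succeed. -/
noncomputable def productTestOp {m : ℕ} (d : Fin m → ℕ) :
    Matrix ((∀ i, Fin (d i)) × (∀ i, Fin (d i))) ((∀ i, Fin (d i)) × (∀ i, Fin (d i))) ℂ :=
  fun p q => ∏ i,
    (((if p.1 i = q.1 i ∧ p.2 i = q.2 i then 1 else 0) +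
      (if p.1 i = q.2 i ∧ p.2 i = q.1 i then 1 else 0)) / 2)

/-
Each swap test measures the projector `(I + SWAPᵢ)/2`, so expanding the tensor product of the
`m` projectors gives `2⁻ᵐ ∑_S SWAP_S`, where `SWAP_S` exchanges the two copies on the
subsystems in `S`. The swap trick `Tr[SWAP_S (ρ ⊗ ρ)] = Tr[ρ_S²]` then evaluates each term.
-/

lemma Matrix.trace_permMatrix_mul {n R : Type*} [Fintype n] [DecidableEq n] [NonAssocSemiring R]
    (σ : Equiv.Perm n) (M : Matrix n n R) : (σ.permMatrix R * M).trace = ∑ p, M (σ p) p := by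
  simp [Equiv.Perm.permMatrix, PEquiv.toMatrix_toPEquiv_mul, Matrix.trace]

section SwapOn

variable {ι : Type*} [DecidableEq ι] {α : ι → Type*}

def swapOn (S : Finset ι) : Equiv.Perm ((∀ i, α i) × (∀ i, α i)) :=
  Function.Involutive.toPerm (fun p => (S.piecewise p.2 p.1, S.piecewise p.1 p.2)) fun p => by
    ext i <;> by_cases h : i ∈ S <;> simp [h]

@[simp]
lemma swapOn_apply (S : Finset ι) (p : (∀ i, α i) × (∀ i, α i)) :
    swapOn S p = (S.piecewise p.2 p.1, S.piecewise p.1 p.2) := rfl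

lemma permMatrix_swapOn_apply [Fintype ι] [∀ i, DecidableEq (α i)] {R : Type*}
    [CommMonoidWithZero R] (S : Finset ι) (p q : (∀ i, α i) × (∀ i, α i)) :
    (swapOn S).permMatrix R p q =
      (∏ i ∈ S, if p.1 i = q.2 i ∧ p.2 i = q.1 i then 1 else 0) *
        ∏ i ∈ Sᶜ, if p.1 i = q.1 i ∧ p.2 i = q.2 i then 1 else 0 := by
  simp only [Finset.prod_boole, ite_zero_mul_ite_zero, mul_one, Equiv.Perm.permMatrix,
    PEquiv.toMatrix_apply, Equiv.toPEquiv_apply, Option.mem_def, Option.some.injEq]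
  congr 1
  simp only [swapOn_apply, Prod.ext_iff, funext_iff, Finset.mem_compl, ← forall_and]
  refine propext (forall_congr' fun i => ?_)
  by_cases h : i ∈ S <;> simp [h, eq_comm, and_comm]

def Finset.piSplit [Fintype ι] (S : Finset ι) :
    (∀ i : S, α i) × (∀ i : ↥Sᶜ, α i) ≃ ∀ i, α i where
  toFun x i := if h : i ∈ S then x.1 ⟨i, h⟩ else x.2 ⟨i, Finset.mem_compl.mpr h⟩
  invFun f := (fun i => f i, fun i => f i)
  left_inv x := by
    ext i
    · simp [i.2]
    · simp [Finset.mem_compl.mp i.2]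
  right_inv f := by
    ext i
    by_cases h : i ∈ S <;> simp [h]

lemma swapOn_piSplit [Fintype ι] (S : Finset ι) (a b : ∀ i : S, α i)
    (c c' : ∀ i : ↥Sᶜ, α i) :
    swapOn S (S.piSplit (b, c), S.piSplit (a, c')) = (S.piSplit (a, c), S.piSplit (b, c')) := by
  ext i <;> by_cases h : i ∈ S <;> simp [Finset.piSplit, h]

end SwapOn

lemma productTestOp_eq_sum_permMatrix {m : ℕ} (d : Fin m → ℕ) :
    productTestOp d = (1 / 2 ^ m : ℂ) • ∑ S : Finset (Fin m), (swapOn S).permMatrix ℂ := by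
  ext p q
  rw [productTestOp, Finset.prod_div_distrib, Finset.prod_const, Finset.card_univ,
    Fintype.card_fin, Matrix.smul_apply, smul_eq_mul, div_eq_inv_mul, one_div, Matrix.sum_apply,
    Finset.prod_congr rfl fun i _ => add_comm _ _, Fintype.prod_add]
  simp only [permMatrix_swapOn_apply]

lemma reducedState_apply {m : ℕ} {d : Fin m → ℕ}
    (ρ : Matrix (∀ i, Fin (d i)) (∀ i, Fin (d i)) ℂ) (S : Finset (Fin m))
    (a b : ∀ i : S, Fin (d i)) :
    reducedState ρ S a b = ∑ c, ρ (S.piSplit (a, c)) (S.piSplit (b, c)) := rfl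

lemma trace_reducedState_mul_self {m : ℕ} {d : Fin m → ℕ}
    (ρ : Matrix (∀ i, Fin (d i)) (∀ i, Fin (d i)) ℂ) (S : Finset (Fin m)) :
    (reducedState ρ S * reducedState ρ S).trace =
      ((swapOn S).permMatrix ℂ * (ρ ⊗ₖ ρ)).trace := by
  rw [trace_permMatrix_mul, ← (S.piSplit.prodCongr S.piSplit).sum_comp]
  simp only [Fintype.sum_prod_type, Equiv.prodCongr_apply, Prod.map, swapOn_piSplit,
    kroneckerMap_apply, trace, diag, mul_apply, reducedState_apply, Finset.sum_mul_sum]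
  rw [Finset.sum_comm]
  exact Finset.sum_congr rfl fun b _ => Finset.sum_comm

theorem stmt_6_general (m : ℕ) (d : Fin m → ℕ)
    (ρ : Matrix (∀ i, Fin (d i)) (∀ i, Fin (d i)) ℂ) :
    (productTestOp d * (ρ ⊗ₖ ρ)).trace =
      (1 / 2 ^ m) * ∑ S : Finset (Fin m), (reducedState ρ S * reducedState ρ S).trace := by
  rw [productTestOp_eq_sum_permMatrix, smul_mul, trace_smul, Matrix.sum_mul, trace_sum, smul_eq_mul]
  simp_rw [trace_reducedState_mul_self]

/-- Product test for mixed states: on an `n`-qubit system partitioned into `m` subsystems of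
local dimensions `d₁,…,d_m` with `∏ᵢ dᵢ = 2ⁿ`, the product test applied to two copies of `ρ`
accepts with probability exactly `(1/2^m) · Σ_{S⊆[m]} Tr[ρ_S²]`. -/
theorem stmt_6 (n m : ℕ) (d : Fin m → ℕ) (hd : ∏ i, d i = 2 ^ n)
    (ρ : Matrix (∀ i, Fin (d i)) (∀ i, Fin (d i)) ℂ) (hρ : IsDensityMatrix ρ) :
    (productTestOp d * (ρ ⊗ₖ ρ)).trace =
      (1 / 2 ^ m) * ∑ S : Finset (Fin m), (reducedState ρ S * reducedState ρ S).trace :=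
  stmt_6_general m d ρ
end

section
/- Let ρ_{AB} be a state and M = (Π₀, Π₁) a binary projective measurement with M(ρ) = Π₀ρΠ₀ + Π₁ρΠ₁. If Tr[(Tr_B(M(ρ_{AB})))²] ≥ 1 − ε for ε ≤ 1/4, then ‖Tr_B(ρ_{AB}) − Tr_B(M(ρ_{AB}))‖₁ ≤ ε^{1/4} (up to a constant); in particular, writing M(ρ_{AB}) = p₀σ₀ + p₁σ₁ for the reduced post-measurement states σ_b with probabilities p_b, either some p_b ≥ 1 − √ε, or Tr(σ₀σ₁) ≥ 1 − √ε. -/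
open Matrix
open scoped ComplexOrder

/-- The trace norm (sum of singular values) of a complex square matrix. -/
noncomputable def traceNorm {n : Type*} [Fintype n] [DecidableEq n] (A : Matrix n n ℂ) : ℝ :=
  ∑ i, Real.sqrt ((Matrix.posSemidef_conjTranspose_mul_self A).1.eigenvalues i)

/-- An orthogonal projection: Hermitian and idempotent. -/
def IsProjection {n : Type*} [Fintype n] (P : Matrix n n ℂ) : Prop :=
  P.IsHermitian ∧ P * P = P

/-- The partial trace over the second register. -/
noncomputable def ptB {A B : Type*} [Fintype B] (M : Matrix (A × B) (A × B) ℂ) :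
    Matrix A A ℂ := fun a a' => ∑ b, M (a, b) (a', b)

/-!
Let `X = Tr_B ρ` and `Y = Tr_B M(ρ)`. Purity of `Y` forces its top eigenvalue `λ` to be at least
`1 - ε`; let `ψ` project onto a corresponding eigenvector. Since `M` averages the identity and the
conjugation by the reflection `P₀ - P₁`, we get `Tr(ψ X) ≥ 2 Tr(ψ Y) - 1 ≥ 1 - 2ε`. Hence `X - ψ`
is traceless with Hilbert–Schmidt norm at most `2√ε`, and it has at most one negative eigenvalue
(`ψ` has rank one), so the trace of its positive part is at most `2√ε`. Together with `Y ≥ λ ψ`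
this gives `Tr(Q (X - Y)) ≤ 2√ε + ε` for all `0 ≤ Q ≤ 1`, i.e. `‖X - Y‖₁ ≤ 2 (2√ε + ε)`.

For the dichotomy, expanding `Tr((p₀σ₀ + p₁σ₁)²) ≥ 1 - ε` with `Tr σ_b² ≤ 1` gives
`p₀p₁ Tr(σ₀σ₁) ≥ p₀p₁ - ε/2`, and `p₀p₁ ≥ √ε (1 - √ε)` once both `p_b > √ε`.
-/

namespace Matrix.IsHermitian

variable {n : Type*} [Fintype n] [DecidableEq n] {H : Matrix n n ℂ} (hH : H.IsHermitian)

/-- Unlike `hH.cfc f`, the weights `d` may separate eigenvectors sharing an eigenvalue, which is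
what makes the rank-one projection onto a single eigenvector expressible. -/
noncomputable def eigenDiag (d : n → ℝ) : Matrix n n ℂ :=
  Unitary.conjStarAlgAut ℝ _ hH.eigenvectorUnitary (diagonal (RCLike.ofReal ∘ d))

lemma eigenDiag_mul (d e : n → ℝ) : hH.eigenDiag d * hH.eigenDiag e = hH.eigenDiag (d * e) := by
  simp only [eigenDiag, ← map_mul, diagonal_mul_diagonal]
  congr 2; ext i; simp

lemma eigenDiag_sub (d e : n → ℝ) : hH.eigenDiag d - hH.eigenDiag e = hH.eigenDiag (d - e) := by
  simp only [eigenDiag, ← map_sub, diagonal_sub]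
  congr 2; ext i; simp

lemma eigenDiag_smul (r : ℝ) (d : n → ℝ) : r • hH.eigenDiag d = hH.eigenDiag (r • d) := by
  simp only [eigenDiag, ← map_smul]
  congr 1; ext i j; by_cases h : i = j <;> simp [h, Complex.real_smul]

lemma eigenDiag_one : hH.eigenDiag 1 = 1 := by
  simp [eigenDiag, Function.comp_def]

lemma eigenDiag_eigenvalues : hH.eigenDiag hH.eigenvalues = H :=
  hH.spectral_theorem.symm

lemma trace_eigenDiag (d : n → ℝ) : (hH.eigenDiag d).trace = ∑ i, (d i : ℂ) := by
  rw [eigenDiag, Unitary.conjStarAlgAut_apply, trace_mul_cycle, Unitary.coe_star_mul_self,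
    one_mul, trace_diagonal]
  rfl

lemma re_trace_eigenDiag (d : n → ℝ) : (hH.eigenDiag d).trace.re = ∑ i, d i := by
  simp [trace_eigenDiag]

lemma isHermitian_eigenDiag (d : n → ℝ) : (hH.eigenDiag d).IsHermitian := by
  rw [IsHermitian, ← star_eq_conjTranspose, eigenDiag, ← map_star, star_eq_conjTranspose,
    diagonal_conjTranspose]
  congr 2; ext i; simp

lemma posSemidef_eigenDiag {d : n → ℝ} (hd : 0 ≤ d) : (hH.eigenDiag d).PosSemidef := by
  rw [eigenDiag, Unitary.conjStarAlgAut_apply,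
    (Unitary.isUnit_coe (U := hH.eigenvectorUnitary)).posSemidef_star_right_conjugate_iff,
    posSemidef_diagonal_iff]
  exact fun i => by simpa using hd i

lemma eigenDiag_single (t : n) :
    hH.eigenDiag (Pi.single t 1) =
      vecMulVec ⇑(hH.eigenvectorBasis t) (star ⇑(hH.eigenvectorBasis t)) := by
  ext a a'
  simp [eigenDiag, mul_apply, diagonal_apply, vecMulVec_apply, Pi.single_apply, apply_ite]

lemma isProjection_eigenDiag_single (t : n) : IsProjection (hH.eigenDiag (Pi.single t 1)) := by
  refine ⟨hH.isHermitian_eigenDiag _, ?_⟩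
  rw [hH.eigenDiag_mul, ← Pi.single_mul, mul_one]

lemma trace_eigenDiag_single (t : n) : (hH.eigenDiag (Pi.single t 1)).trace = 1 := by
  simp [hH.trace_eigenDiag, Pi.single_apply, apply_ite]

lemma re_trace_eigenDiag_single_mul (t : n) :
    (hH.eigenDiag (Pi.single t 1) * H).trace.re = hH.eigenvalues t := by
  calc (hH.eigenDiag (Pi.single t 1) * H).trace.re
      = (hH.eigenDiag (Pi.single t 1) * hH.eigenDiag hH.eigenvalues).trace.re := by
        rw [hH.eigenDiag_eigenvalues]
    _ = hH.eigenvalues t := by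
        rw [hH.eigenDiag_mul, hH.re_trace_eigenDiag]
        simp [Pi.single_apply]

end Matrix.IsHermitian

namespace Matrix

variable {n : Type*} [Fintype n] [DecidableEq n] {Q M D : Matrix n n ℂ}

lemma IsHermitian.re_trace_eq_sum_eigenvalues (hD : D.IsHermitian) :
    D.trace.re = ∑ i, hD.eigenvalues i := by
  simp [hD.trace_eq_sum_eigenvalues]

lemma IsHermitian.re_trace_mul_self (hD : D.IsHermitian) :
    (D * D).trace.re = ∑ i, hD.eigenvalues i ^ 2 := by
  conv_lhs => rw [← hD.eigenDiag_eigenvalues, hD.eigenDiag_mul, hD.re_trace_eigenDiag]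
  simp [sq]

lemma PosSemidef.re_trace_mul_self_le (hM : M.PosSemidef) :
    (M * M).trace.re ≤ M.trace.re ^ 2 := by
  rw [hM.1.re_trace_mul_self, hM.1.re_trace_eq_sum_eigenvalues]
  exact Finset.sum_sq_le_sq_sum_of_nonneg fun i _ => hM.eigenvalues_nonneg i

open scoped MatrixOrder in
lemma PosSemidef.re_trace_mul_nonneg (hQ : Q.PosSemidef) (hM : M.PosSemidef) :
    0 ≤ (Q * M).trace.re := by
  have hQ0 : 0 ≤ Q := hQ.nonneg
  set S := CFC.sqrt Q
  have hS : Sᴴ = S := (CFC.sqrt_nonneg Q).isSelfAdjoint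
  have hSS : S * S = Q := CFC.sqrt_mul_sqrt_self Q
  have hcycle : (Q * M).trace = (Sᴴ * M * S).trace := by
    rw [← hSS, hS, Matrix.mul_assoc, trace_mul_comm, Matrix.mul_assoc]
  rw [hcycle]
  exact (Complex.nonneg_iff.1 (hM.conjTranspose_mul_mul_same S).trace_nonneg).1

lemma PosSemidef.re_trace_mul_le (hQ1 : (1 - Q).PosSemidef) (hM : M.PosSemidef) :
    (Q * M).trace.re ≤ M.trace.re := by
  have h := hQ1.re_trace_mul_nonneg hM
  rw [Matrix.sub_mul, Matrix.one_mul, trace_sub, Complex.sub_re] at h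
  linarith

lemma IsHermitian.re_trace_mul_le_sum_posPart (hD : D.IsHermitian) (hQ : Q.PosSemidef)
    (hQ1 : (1 - Q).PosSemidef) :
    (Q * D).trace.re ≤ ∑ i, max (hD.eigenvalues i) 0 := by
  set Dpos := hD.eigenDiag fun i => max (hD.eigenvalues i) 0
  set Dneg := hD.eigenDiag fun i => max (-hD.eigenvalues i) 0
  have hsplit : D = Dpos - Dneg := by
    conv_lhs => rw [← hD.eigenDiag_eigenvalues]
    rw [hD.eigenDiag_sub]
    congr 1; ext i; exact (max_zero_sub_max_neg_zero_eq_self _).symm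
  have hneg : 0 ≤ (Q * Dneg).trace.re :=
    hQ.re_trace_mul_nonneg (hD.posSemidef_eigenDiag fun i => le_max_right _ _)
  have hpos : (Q * Dpos).trace.re ≤ Dpos.trace.re :=
    hQ1.re_trace_mul_le (hD.posSemidef_eigenDiag fun i => le_max_right _ _)
  have hdiff : (Q * D).trace.re = (Q * Dpos).trace.re - (Q * Dneg).trace.re := by
    conv_lhs => rw [hsplit, Matrix.mul_sub, trace_sub, Complex.sub_re]
  rw [hD.re_trace_eigenDiag] at hpos
  linarith

end Matrix

section TraceNorm

variable {n : Type*} [Fintype n] [DecidableEq n] {D : Matrix n n ℂ}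

open scoped MatrixOrder in
lemma traceNorm_eq_sum_abs_eigenvalues (hD : D.IsHermitian) :
    traceNorm D = ∑ i, |hD.eigenvalues i| := by
  have hDD := posSemidef_conjTranspose_mul_self D
  have habs : CFC.sqrt (Dᴴ * D) = hD.eigenDiag fun i => |hD.eigenvalues i| := by
    refine CFC.sqrt_unique ?_ (hD.posSemidef_eigenDiag fun i => abs_nonneg _).nonneg
    rw [hD.eigenDiag_mul, hD.eq]
    conv_rhs => rw [← hD.eigenDiag_eigenvalues, hD.eigenDiag_mul]
    congr 1; ext i; exact abs_mul_abs_self _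
  have hsqrt : CFC.sqrt (Dᴴ * D) = hDD.1.eigenDiag fun i => √(hDD.1.eigenvalues i) := by
    rw [CFC.sqrt_eq_real_sqrt _ hDD.nonneg, cfcₙ_eq_cfc, hDD.1.cfc_eq]
    rfl
  have := congrArg (fun X => X.trace.re) (habs.symm.trans hsqrt)
  simp only [IsHermitian.re_trace_eigenDiag] at this
  rw [traceNorm, ← this]

lemma traceNorm_le_of_forall_re_trace_mul_le (hD : D.IsHermitian) (htr : D.trace = 0) {c : ℝ}
    (hc : ∀ Q : Matrix n n ℂ, Q.PosSemidef → (1 - Q).PosSemidef → (Q * D).trace.re ≤ c) :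
    traceNorm D ≤ 2 * c := by
  set ν := hD.eigenvalues
  set Q := hD.eigenDiag fun i => if 0 < ν i then 1 else 0
  have hQ : Q.PosSemidef := hD.posSemidef_eigenDiag fun i => by dsimp only; split_ifs <;> norm_num
  have hQ1 : (1 - Q).PosSemidef := by
    rw [← hD.eigenDiag_one, hD.eigenDiag_sub]
    exact hD.posSemidef_eigenDiag fun i => by dsimp only [Pi.sub_apply]; split_ifs <;> norm_num
  have hQD : (Q * D).trace.re = ∑ i, max (ν i) 0 := by
    conv_lhs => rw [← hD.eigenDiag_eigenvalues]
    rw [hD.eigenDiag_mul, hD.re_trace_eigenDiag]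
    refine Finset.sum_congr rfl fun i _ => ?_
    by_cases h : 0 < ν i
    · simp [ν, h, h.le]
    · simp [ν, h, not_lt.1 h]
  have hsum : ∑ i, ν i = 0 := by
    rw [← hD.re_trace_eq_sum_eigenvalues, htr, Complex.zero_re]
  have habs : ∑ i, |ν i| = 2 * ∑ i, max (ν i) 0 - ∑ i, ν i := by
    rw [Finset.mul_sum, ← Finset.sum_sub_distrib]
    refine Finset.sum_congr rfl fun i _ => ?_
    rcases le_total (ν i) 0 with h | h
    · rw [abs_of_nonpos h, max_eq_right h]; ring
    · rw [abs_of_nonneg h, max_eq_left h]; ring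
  rw [traceNorm_eq_sum_abs_eigenvalues hD, habs, hsum, ← hQD]
  linarith [hc Q hQ hQ1]

end TraceNorm

lemma sum_max_zero_le_sqrt_sum_sq {ι : Type*} [Fintype ι] {f : ι → ℝ} (hsum : ∑ i, f i = 0)
    (hneg : ∀ i j, i ≠ j → f i < 0 → 0 ≤ f j) :
    ∑ i, max (f i) 0 ≤ √(∑ i, f i ^ 2) := by
  have hsplit : ∑ i, max (f i) 0 = ∑ i, max (-f i) 0 := by
    rw [← sub_eq_zero, ← Finset.sum_sub_distrib]
    simpa only [max_zero_sub_max_neg_zero_eq_self] using hsum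
  rw [hsplit]
  by_cases hall : ∀ i, 0 ≤ f i
  · simp_rw [max_eq_right (neg_nonpos.2 (hall _)), Finset.sum_const_zero]
    positivity
  obtain ⟨j, hj⟩ := not_forall.1 hall
  rw [not_le] at hj
  have hsingle : ∑ i, max (-f i) 0 = max (-f j) 0 :=
    Finset.sum_eq_single j (fun i _ hij => max_eq_right (neg_nonpos.2 (hneg j i hij.symm hj)))
      (by simp)
  calc ∑ i, max (-f i) 0 = √(f j ^ 2) := by
        rw [hsingle, max_eq_left (neg_nonneg.2 hj.le), Real.sqrt_sq_eq_abs, abs_of_neg hj]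
    _ ≤ √(∑ i, f i ^ 2) :=
        Real.sqrt_le_sqrt (Finset.single_le_sum (fun i _ => sq_nonneg (f i)) (Finset.mem_univ j))

namespace Matrix.IsHermitian

variable {n : Type*} [Fintype n] [DecidableEq n] {D : Matrix n n ℂ}

lemma star_dotProduct_mulVec_add_eigenvectorBasis (hD : D.IsHermitian) {i j : n} (hij : i ≠ j)
    (α β : ℂ) :
    star (α • ⇑(hD.eigenvectorBasis i) + β • ⇑(hD.eigenvectorBasis j)) ⬝ᵥ
        D *ᵥ (α • ⇑(hD.eigenvectorBasis i) + β • ⇑(hD.eigenvectorBasis j)) =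
      ((Complex.normSq α * hD.eigenvalues i + Complex.normSq β * hD.eigenvalues j : ℝ) : ℂ) := by
  have horth : ∀ k l, star ⇑(hD.eigenvectorBasis k) ⬝ᵥ ⇑(hD.eigenvectorBasis l) =
      if k = l then 1 else 0 := fun k l => by
    rw [dotProduct_comm, ← EuclideanSpace.inner_eq_star_dotProduct]
    exact orthonormal_iff_ite.1 hD.eigenvectorBasis.orthonormal k l
  simp only [mulVec_add, mulVec_smul, hD.mulVec_eigenvectorBasis, star_add, star_smul,
    add_dotProduct, dotProduct_add, smul_dotProduct, dotProduct_smul, horth, hij, hij.symm,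
    RCLike.real_smul_eq_coe_smul (K := ℂ), smul_eq_mul, if_true, if_false]
  push_cast
  simp only [RCLike.star_def, Complex.normSq_eq_conj_mul_self, RCLike.ofReal_eq_complex_ofReal]
  ring

lemma eigenvalues_nonneg_of_sub_vecMulVec {X : Matrix n n ℂ} (hX : X.PosSemidef) (u : n → ℂ)
    (hD : (X - vecMulVec u (star u)).IsHermitian) {i j : n} (hij : i ≠ j)
    (hi : hD.eigenvalues i < 0) : 0 ≤ hD.eigenvalues j := by
  by_contra! hj
  set vi := ⇑(hD.eigenvectorBasis i)
  set vj := ⇑(hD.eigenvectorBasis j)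
  -- a nonzero combination of the two eigenvectors orthogonal to `u` sees only `X`
  obtain ⟨α, β, hαβ, hperp⟩ : ∃ α β : ℂ, (α ≠ 0 ∨ β ≠ 0) ∧
      α * (star u ⬝ᵥ vi) + β * (star u ⬝ᵥ vj) = 0 := by
    by_cases h : star u ⬝ᵥ vi = 0
    · exact ⟨1, 0, by simp, by simp [h]⟩
    · exact ⟨star u ⬝ᵥ vj, -(star u ⬝ᵥ vi), Or.inr (neg_ne_zero.2 h), by ring⟩
  set w := α • vi + β • vj
  have hwu : star u ⬝ᵥ w = 0 := by
    simpa only [w, dotProduct_add, dotProduct_smul, smul_eq_mul] using hperp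
  have hψw : star w ⬝ᵥ vecMulVec u (star u) *ᵥ w = 0 := by
    rw [vecMulVec_mulVec, hwu]
    simp
  have hquad := hD.star_dotProduct_mulVec_add_eigenvectorBasis hij α β
  rw [sub_mulVec, dotProduct_sub, hψw, sub_zero] at hquad
  have hXw := hX.dotProduct_mulVec_nonneg w
  rw [hquad, Complex.zero_le_real] at hXw
  rcases hαβ with hα | hβ
  · nlinarith [Complex.normSq_pos.2 hα, Complex.normSq_nonneg β]
  · nlinarith [Complex.normSq_pos.2 hβ, Complex.normSq_nonneg α]

end Matrix.IsHermitian

section PureState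

variable {n : Type*} [Fintype n] [DecidableEq n] {X Q ψ Y : Matrix n n ℂ}

lemma re_trace_mul_sub_pure_le (hX : X.PosSemidef) (hXtr : X.trace = 1) (u : n → ℂ)
    (hψ : ψ = vecMulVec u (star u)) (hψψ : ψ * ψ = ψ) (hψtr : ψ.trace = 1)
    (hQ : Q.PosSemidef) (hQ1 : (1 - Q).PosSemidef) :
    (Q * (X - ψ)).trace.re ≤ √(2 - 2 * (ψ * X).trace.re) := by
  have hD : (X - ψ).IsHermitian := hX.1.sub (hψ ▸ posSemidef_vecMulVec_self_star u).1
  have hsum : ∑ i, hD.eigenvalues i = 0 := by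
    rw [← hD.re_trace_eq_sum_eigenvalues, trace_sub, hXtr, hψtr, sub_self, Complex.zero_re]
  have hsq : ∑ i, hD.eigenvalues i ^ 2 ≤ 2 - 2 * (ψ * X).trace.re := by
    have hXX := hX.re_trace_mul_self_le
    rw [hXtr, Complex.one_re, one_pow] at hXX
    have hexpand : (X - ψ) * (X - ψ) = X * X - (X * ψ + ψ * X) + ψ * ψ := by noncomm_ring
    rw [← hD.re_trace_mul_self, hexpand, hψψ, trace_add, trace_sub, trace_add,
      trace_mul_comm X ψ, hψtr]
    simp only [Complex.add_re, Complex.sub_re, Complex.one_re]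
    linarith
  have hneg : ∀ i j, i ≠ j → hD.eigenvalues i < 0 → 0 ≤ hD.eigenvalues j := by
    subst hψ
    exact fun i j hij hi => hD.eigenvalues_nonneg_of_sub_vecMulVec hX u hij hi
  calc (Q * (X - ψ)).trace.re ≤ ∑ i, max (hD.eigenvalues i) 0 :=
        hD.re_trace_mul_le_sum_posPart hQ hQ1
    _ ≤ √(∑ i, hD.eigenvalues i ^ 2) := sum_max_zero_le_sqrt_sum_sq hsum hneg
    _ ≤ √(2 - 2 * (ψ * X).trace.re) := Real.sqrt_le_sqrt hsq

lemma re_trace_mul_sub_le_of_smul_le {lam : ℝ} (hψ : ψ.PosSemidef) (hψtr : ψ.trace = 1)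
    (hYψ : (Y - lam • ψ).PosSemidef) (hlam : lam ≤ 1) (hQ : Q.PosSemidef)
    (hQ1 : (1 - Q).PosSemidef) :
    (Q * (ψ - Y)).trace.re ≤ 1 - lam := by
  have hQY := hQ.re_trace_mul_nonneg hYψ
  have hQψ1 := hQ1.re_trace_mul_le hψ
  rw [hψtr, Complex.one_re] at hQψ1
  rw [Matrix.mul_sub, trace_sub, Matrix.mul_smul, trace_smul, Complex.sub_re,
    Complex.real_smul, Complex.re_ofReal_mul] at hQY
  rw [Matrix.mul_sub, trace_sub, Complex.sub_re]
  nlinarith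

end PureState

section PartialTrace

variable {A B : Type*} [Fintype B]

lemma ptB_eq_sum_submatrix (M : Matrix (A × B) (A × B) ℂ) :
    ptB M = ∑ b, M.submatrix (·, b) (·, b) := by
  ext a a'
  simp [ptB, Matrix.sum_apply]

lemma ptB_add (M N : Matrix (A × B) (A × B) ℂ) : ptB (M + N) = ptB M + ptB N := by
  ext a a'
  simp [ptB, Finset.sum_add_distrib]

lemma trace_ptB [Fintype A] (M : Matrix (A × B) (A × B) ℂ) : (ptB M).trace = M.trace := by
  simp [ptB, trace, Fintype.sum_prod_type]

lemma Matrix.PosSemidef.ptB [Fintype A] {M : Matrix (A × B) (A × B) ℂ} (hM : M.PosSemidef) :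
    (ptB M).PosSemidef := by
  rw [ptB_eq_sum_submatrix]
  exact posSemidef_sum _ fun b _ => hM.submatrix _

open scoped Kronecker in
lemma trace_mul_ptB [Fintype A] [DecidableEq B] (N : Matrix A A ℂ) (M : Matrix (A × B) (A × B) ℂ) :
    (N * ptB M).trace = ((N ⊗ₖ (1 : Matrix B B ℂ)) * M).trace := by
  simp only [trace, diag, mul_apply, ptB, Fintype.sum_prod_type, kroneckerMap_apply, one_apply,
    mul_ite, mul_one, mul_zero, ite_mul, zero_mul, Finset.mul_sum, Finset.sum_ite_eq,
    Finset.mem_univ, if_true]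
  exact Finset.sum_congr rfl fun a _ => Finset.sum_comm

open scoped Kronecker in
lemma IsProjection.kronecker_one [Fintype A] [DecidableEq B] {P : Matrix A A ℂ}
    (hP : IsProjection P) : IsProjection (P ⊗ₖ (1 : Matrix B B ℂ)) :=
  ⟨by rw [IsHermitian, conjTranspose_kronecker, hP.1.eq, conjTranspose_one],
    by rw [← mul_kronecker_mul, hP.2, Matrix.one_mul]⟩

end PartialTrace

section Pinching

variable {m : Type*} [Fintype m] {P P₀ P₁ R ρ : Matrix m m ℂ}

lemma IsProjection.posSemidef (hP : IsProjection P) : P.PosSemidef := by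
  simpa only [hP.1.eq, hP.2] using posSemidef_conjTranspose_mul_self P

lemma IsProjection.one_sub [DecidableEq m] (hP : IsProjection P) : IsProjection (1 - P) :=
  ⟨isHermitian_one.sub hP.1, by rw [Matrix.sub_mul, Matrix.mul_sub, Matrix.mul_sub, hP.2]; simp⟩

lemma Matrix.PosSemidef.conj_projection (hρ : ρ.PosSemidef) (hP : IsProjection P) :
    (P * ρ * P).PosSemidef := by
  simpa only [hP.1.eq] using hρ.mul_mul_conjTranspose_same P

lemma IsProjection.trace_mul_mul_self (hP : IsProjection P) (ρ : Matrix m m ℂ) :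
    (P * ρ * P).trace = (P * ρ).trace := by
  rw [trace_mul_cycle, hP.2]

lemma trace_pinching [DecidableEq m] (hP₀ : IsProjection P₀) (hP₁ : IsProjection P₁)
    (hsum : P₀ + P₁ = 1) :
    (P₀ * ρ * P₀ + P₁ * ρ * P₁).trace = ρ.trace := by
  rw [trace_add, hP₀.trace_mul_mul_self, hP₁.trace_mul_mul_self, ← trace_add, ← Matrix.add_mul,
    hsum, Matrix.one_mul]

lemma two_mul_re_trace_mul_pinching_le [DecidableEq m] (hρ : ρ.PosSemidef) (hρtr : ρ.trace = 1)
    (hP₀ : IsProjection P₀) (hsum : P₀ + P₁ = 1) (hR : IsProjection R) :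
    2 * (R * (P₀ * ρ * P₀ + P₁ * ρ * P₁)).trace.re ≤ (R * ρ).trace.re + 1 := by
  obtain rfl : P₁ = 1 - P₀ := eq_sub_of_add_eq' hsum
  -- `ρ ↦ P₀ ρ P₀ + P₁ ρ P₁` is the average of the identity and of conjugation by `U`
  set U := P₀ - (1 - P₀)
  have hUU : U * U = 1 := by
    calc U * U = 4 • (P₀ * P₀ - P₀) + 1 := by simp only [U]; noncomm_ring
      _ = 1 := by rw [hP₀.2, sub_self, smul_zero, zero_add]
  have hS : IsProjection (U * R * U) := by
    refine ⟨?_, ?_⟩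
    · simp only [IsHermitian, U, conjTranspose_mul, conjTranspose_sub, conjTranspose_one,
        hP₀.1.eq, hR.1.eq, Matrix.mul_assoc]
    · calc U * R * U * (U * R * U) = U * R * (U * U) * R * U := by simp only [Matrix.mul_assoc]
        _ = U * R * U := by rw [hUU, Matrix.mul_one, Matrix.mul_assoc U R R, hR.2]
  have hSρ : (U * R * U * ρ).trace.re ≤ 1 := by
    simpa [hρtr] using hS.one_sub.posSemidef.re_trace_mul_le hρ
  have hcycle : ∀ P : Matrix m m ℂ, (R * (P * ρ * P)).trace = (P * R * P * ρ).trace := fun P => by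
    rw [trace_mul_comm, Matrix.mul_assoc, trace_mul_comm]
    simp only [Matrix.mul_assoc]
  have hpinch : (P₀ * R * P₀ + (1 - P₀) * R * (1 - P₀)) + (P₀ * R * P₀ + (1 - P₀) * R * (1 - P₀))
      = R + U * R * U := by
    simp only [U]
    noncomm_ring
  have htrace := congrArg (fun M => (M * ρ).trace.re) hpinch
  simp only [Matrix.add_mul, trace_add, Complex.add_re] at htrace
  rw [Matrix.mul_add, trace_add, Complex.add_re, hcycle, hcycle]
  linarith

end Pinching

namespace Matrix.PosSemidef

variable {n : Type*} [Fintype n] [DecidableEq n] {Y : Matrix n n ℂ}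

lemma posSemidef_sub_smul_eigenDiag_single (hY : Y.PosSemidef) (t : n) :
    (Y - hY.1.eigenvalues t • hY.1.eigenDiag (Pi.single t 1)).PosSemidef := by
  conv => arg 1; arg 1; rw [← hY.1.eigenDiag_eigenvalues]
  rw [hY.1.eigenDiag_smul, hY.1.eigenDiag_sub]
  refine hY.1.posSemidef_eigenDiag fun i => ?_
  by_cases h : i = t
  · simp [h]
  · simp [h, hY.eigenvalues_nonneg i]

lemma re_trace_mul_self_le_of_forall_le (hY : Y.PosSemidef) (hYtr : Y.trace = 1) {t : n}
    (ht : ∀ i, hY.1.eigenvalues i ≤ hY.1.eigenvalues t) :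
    (Y * Y).trace.re ≤ hY.1.eigenvalues t := by
  have hsum : ∑ i, hY.1.eigenvalues i = 1 := by
    rw [← hY.1.re_trace_eq_sum_eigenvalues, hYtr, Complex.one_re]
  calc (Y * Y).trace.re = ∑ i, hY.1.eigenvalues i * hY.1.eigenvalues i := by
        rw [hY.1.re_trace_mul_self]; simp only [sq]
    _ ≤ ∑ i, hY.1.eigenvalues i * hY.1.eigenvalues t :=
        Finset.sum_le_sum fun i _ => mul_le_mul_of_nonneg_left (ht i) (hY.eigenvalues_nonneg i)
    _ = hY.1.eigenvalues t := by rw [← Finset.sum_mul, hsum, one_mul]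

end Matrix.PosSemidef

section GentleMeasurement

variable {A B : Type*} [Fintype A] [Fintype B] [DecidableEq A] [DecidableEq B]
  {ρ P₀ P₁ : Matrix (A × B) (A × B) ℂ}

open scoped Kronecker in
lemma two_mul_re_trace_mul_ptB_pinching_le (hρ : ρ.PosSemidef) (hρtr : ρ.trace = 1)
    (hP₀ : IsProjection P₀) (hsum : P₀ + P₁ = 1) {ψ : Matrix A A ℂ} (hψ : IsProjection ψ) :
    2 * (ψ * ptB (P₀ * ρ * P₀ + P₁ * ρ * P₁)).trace.re ≤ (ψ * ptB ρ).trace.re + 1 := by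
  simpa only [trace_mul_ptB] using
    two_mul_re_trace_mul_pinching_le hρ hρtr hP₀ hsum (hψ.kronecker_one (B := B))

lemma traceNorm_ptB_sub_ptB_pinching_le (hρ : ρ.PosSemidef) (hρtr : ρ.trace = 1)
    (hP₀ : IsProjection P₀) (hP₁ : IsProjection P₁) (hsum : P₀ + P₁ = 1) {ε : ℝ}
    (hpurity : 1 - ε ≤
      ((ptB (P₀ * ρ * P₀ + P₁ * ρ * P₁) * ptB (P₀ * ρ * P₀ + P₁ * ρ * P₁)).trace).re) :
    traceNorm (ptB ρ - ptB (P₀ * ρ * P₀ + P₁ * ρ * P₁)) ≤ 2 * (2 * √ε + ε) := by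
  set X := ptB ρ
  set Y := ptB (P₀ * ρ * P₀ + P₁ * ρ * P₁)
  have hX : X.PosSemidef := hρ.ptB
  have hY : Y.PosSemidef := ((hρ.conj_projection hP₀).add (hρ.conj_projection hP₁)).ptB
  have hXtr : X.trace = 1 := by rw [trace_ptB, hρtr]
  have hYtr : Y.trace = 1 := by rw [trace_ptB, trace_pinching hP₀ hP₁ hsum, hρtr]
  have : Nonempty A := by
    by_contra h
    simp [not_nonempty_iff.1 h, trace] at hYtr
  obtain ⟨t, -, ht⟩ := Finset.univ.exists_max_image hY.1.eigenvalues Finset.univ_nonempty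
  set lam := hY.1.eigenvalues t
  set ψ := hY.1.eigenDiag (Pi.single t 1)
  have hψ : IsProjection ψ := hY.1.isProjection_eigenDiag_single t
  have hψtr : ψ.trace = 1 := hY.1.trace_eigenDiag_single t
  have hψY : (ψ * Y).trace.re = lam := hY.1.re_trace_eigenDiag_single_mul t
  have hlam : 1 - ε ≤ lam :=
    hpurity.trans (hY.re_trace_mul_self_le_of_forall_le hYtr fun i => ht i (Finset.mem_univ i))
  have hlam1 : lam ≤ 1 := by
    simpa [hψY, hYtr] using hψ.one_sub.posSemidef.re_trace_mul_le hY
  have hψX : 1 - 2 * ε ≤ (ψ * X).trace.re := by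
    have := two_mul_re_trace_mul_ptB_pinching_le hρ hρtr hP₀ hsum hψ
    linarith
  refine traceNorm_le_of_forall_re_trace_mul_le (hX.1.sub hY.1)
    (by rw [trace_sub, hXtr, hYtr, sub_self]) fun Q hQ hQ1 => ?_
  have hXψ := re_trace_mul_sub_pure_le hX hXtr _ (hY.1.eigenDiag_single t) hψ.2 hψtr hQ hQ1
  have hψY' := re_trace_mul_sub_le_of_smul_le hψ.posSemidef hψtr
    (hY.posSemidef_sub_smul_eigenDiag_single t) hlam1 hQ hQ1
  calc (Q * (X - Y)).trace.re = (Q * (X - ψ)).trace.re + (Q * (ψ - Y)).trace.re := by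
        rw [← Complex.add_re, ← trace_add, ← Matrix.mul_add, sub_add_sub_cancel]
    _ ≤ √(4 * ε) + ε := add_le_add (hXψ.trans (Real.sqrt_le_sqrt (by linarith))) (by linarith)
    _ = 2 * √ε + ε := by
        rw [Real.sqrt_mul (by norm_num), show (4 : ℝ) = 2 ^ 2 by norm_num,
          Real.sqrt_sq (by norm_num)]

end GentleMeasurement

lemma two_mul_two_mul_sqrt_add_le {ε : ℝ} (hε0 : 0 ≤ ε) (hε : ε ≤ 1 / 4) :
    2 * (2 * √ε + ε) ≤ 4 * ε ^ ((1 : ℝ) / 4) := by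
  set y := ε ^ ((1 : ℝ) / 4)
  have hy0 : 0 ≤ y := Real.rpow_nonneg hε0 _
  have hy2 : y ^ 2 = √ε := by
    rw [Real.sqrt_eq_rpow, ← Real.rpow_natCast, ← Real.rpow_mul hε0]
    norm_num
  have hs : √ε ≤ 1 / 2 := by
    rw [show (1 / 2 : ℝ) = √(1 / 4) by rw [show (1 / 4 : ℝ) = (1 / 2) ^ 2 by norm_num,
      Real.sqrt_sq (by norm_num)]]
    exact Real.sqrt_le_sqrt hε
  have hε_le : 2 * ε ≤ √ε := by nlinarith [Real.sq_sqrt hε0, Real.sqrt_nonneg ε]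
  have hy : y ≤ 4 / 5 := by nlinarith
  nlinarith

lemma one_sub_sqrt_le_re_trace_smul_mul_smul {n : Type*} [Fintype n] [DecidableEq n]
    {A₀ A₁ : Matrix n n ℂ} (h₀ : A₀.PosSemidef) (h₁ : A₁.PosSemidef) {p₀ p₁ ε : ℝ}
    (hp₀ : A₀.trace.re = p₀) (hp₁ : A₁.trace.re = p₁) (hp : p₀ + p₁ = 1)
    (hε0 : 0 ≤ ε) (hs₀ : √ε < p₀) (hs₁ : √ε < p₁)
    (hpurity : 1 - ε ≤ ((A₀ + A₁) * (A₀ + A₁)).trace.re) :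
    1 - √ε ≤ ((p₀⁻¹ • A₀) * (p₁⁻¹ • A₁)).trace.re := by
  set s := √ε
  have hs0 : 0 ≤ s := Real.sqrt_nonneg ε
  have hs2 : s ^ 2 = ε := Real.sq_sqrt hε0
  have hs : s ≤ 1 / 2 := by linarith
  have h₀₀ := h₀.re_trace_mul_self_le
  have h₁₁ := h₁.re_trace_mul_self_le
  rw [hp₀] at h₀₀
  rw [hp₁] at h₁₁
  have hcross : p₀ * p₁ - ε / 2 ≤ (A₀ * A₁).trace.re := by
    have hexpand : ((A₀ + A₁) * (A₀ + A₁)).trace.re =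
        (A₀ * A₀).trace.re + (A₁ * A₁).trace.re + 2 * (A₀ * A₁).trace.re := by
      rw [Matrix.add_mul, Matrix.mul_add, Matrix.mul_add, trace_add, trace_add, trace_add,
        trace_mul_comm A₁ A₀]
      simp only [Complex.add_re]
      ring
    nlinarith
  have hpp : s * (1 - s) ≤ p₀ * p₁ := by nlinarith [mul_pos (sub_pos.2 hs₀) (sub_pos.2 hs₁)]
  have hpos : 0 < p₀ * p₁ := by nlinarith
  rw [Matrix.smul_mul, Matrix.mul_smul, smul_smul, trace_smul, Complex.real_smul,
    Complex.re_ofReal_mul, ← mul_inv, inv_mul_eq_div, le_div_iff₀ hpos]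
  nlinarith

/-- Gentle measurement for approximately pure subsystems: if `M(ρ) = Π₀ρΠ₀ + Π₁ρΠ₁` and
`Tr[(Tr_B M(ρ_{AB}))²] ≥ 1 − ε` with `ε ≤ 1/4`, then
`‖Tr_B ρ_{AB} − Tr_B M(ρ_{AB})‖₁ ≤ ε^{1/4}` up to a constant (here: `4·ε^{1/4}`); and either
some outcome probability `p_b ≥ 1 − √ε`, or the normalized reduced post-measurement states
satisfy `Tr(σ₀σ₁) ≥ 1 − √ε`. -/
theorem stmt_13 {A B : Type*} [Fintype A] [Fintype B] [DecidableEq A] [DecidableEq B]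
    (ρ : Matrix (A × B) (A × B) ℂ) (hρ : IsDensityMatrix ρ)
    (P₀ P₁ : Matrix (A × B) (A × B) ℂ)
    (hP₀ : IsProjection P₀) (hP₁ : IsProjection P₁) (hsum : P₀ + P₁ = 1)
    (ε : ℝ) (hε0 : 0 ≤ ε) (hε : ε ≤ 1 / 4)
    (hpurity : 1 - ε ≤
      ((ptB (P₀ * ρ * P₀ + P₁ * ρ * P₁) * ptB (P₀ * ρ * P₀ + P₁ * ρ * P₁)).trace).re) :
    traceNorm (ptB ρ - ptB (P₀ * ρ * P₀ + P₁ * ρ * P₁)) ≤ 4 * ε ^ ((1 : ℝ) / 4) ∧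
    (1 - Real.sqrt ε ≤ ((P₀ * ρ).trace).re ∨
     1 - Real.sqrt ε ≤ ((P₁ * ρ).trace).re ∨
     1 - Real.sqrt ε ≤
      (((((P₀ * ρ).trace).re)⁻¹ • ptB (P₀ * ρ * P₀) *
        ((((P₁ * ρ).trace).re)⁻¹ • ptB (P₁ * ρ * P₁))).trace).re) := by
  obtain ⟨hρ, hρtr⟩ := hρ
  refine ⟨(traceNorm_ptB_sub_ptB_pinching_le hρ hρtr hP₀ hP₁ hsum hpurity).trans
    (two_mul_two_mul_sqrt_add_le hε0 hε), ?_⟩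
  have hp : ((P₀ * ρ).trace).re + ((P₁ * ρ).trace).re = 1 := by
    rw [← Complex.add_re, ← trace_add, ← Matrix.add_mul, hsum, Matrix.one_mul, hρtr,
      Complex.one_re]
  by_cases h₀ : 1 - √ε ≤ ((P₀ * ρ).trace).re
  · exact Or.inl h₀
  by_cases h₁ : 1 - √ε ≤ ((P₁ * ρ).trace).re
  · exact Or.inr (Or.inl h₁)
  rw [ptB_add] at hpurity
  refine Or.inr (Or.inr (one_sub_sqrt_le_re_trace_smul_mul_smul
    (hρ.conj_projection hP₀).ptB (hρ.conj_projection hP₁).ptB ?_ ?_ hp hε0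
    (by linarith) (by linarith) hpurity))
  · rw [trace_ptB, hP₀.trace_mul_mul_self]
  · rw [trace_ptB, hP₁.trace_mul_mul_self]
end

section
/- Let A be a quantum oracle algorithm making at most T queries to a unitary oracle, and define f(U) := Pr[A^U outputs 1]. Then f is T-Lipschitz with respect to the Frobenius norm: |f(U) − f(V)| ≤ T·‖U − V‖_F for all unitaries U, V. -/
open Matrix
open scoped ComplexOrder Kronecker

/-- The Frobenius norm of a complex matrix, `‖A‖_F = √Tr(AᴴA)`. -/
noncomputable def frobNorm {n : Type*} [Fintype n] (A : Matrix n n ℂ) : ℝ :=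
  Real.sqrt (((Aᴴ * A).trace).re)

/-- The final operator applied by the `T`-query oracle algorithm with interleaved fixed
unitaries `W T, …, W 0` (queries act as `U ⊗ I` on the query register):
`A^U = W T · (U ⊗ I) · W (T−1) · … · (U ⊗ I) · W 0`. -/
noncomputable def algOp {d k : Type*} [Fintype d] [DecidableEq d] [Fintype k] [DecidableEq k]
    (T : ℕ) (W : ℕ → Matrix (d × k) (d × k) ℂ) (U : Matrix d d ℂ) :
    Matrix (d × k) (d × k) ℂ :=
  W T * (List.ofFn (fun i : Fin T =>
    (U ⊗ₖ (1 : Matrix k k ℂ)) * W (T - 1 - (i : ℕ)))).prod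

/-- The probability that the algorithm outputs `1`: the measurement `M` applied to the final
state `A^U |v⟩`. -/
noncomputable def algAcceptProb {d k : Type*} [Fintype d] [DecidableEq d]
    [Fintype k] [DecidableEq k]
    (T : ℕ) (W : ℕ → Matrix (d × k) (d × k) ℂ) (v : d × k → ℂ)
    (M : Matrix (d × k) (d × k) ℂ) (U : Matrix d d ℂ) : ℝ :=
  (_root_.dotProduct (star ((algOp T W U).mulVec v))
    (M.mulVec ((algOp T W U).mulVec v))).re

/-
The acceptance probability is `f(U) = re ⟪ψ_U, M ψ_U⟫` with `ψ_U = A^U v` a unit vector.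

Hybrid argument: exchanging the `T` queries `U ⊗ I` for `V ⊗ I` one at a time, and using that
every other factor is unitary, gives `‖A^U - A^V‖ ≤ T ‖(U - V) ⊗ I‖` in operator norm, and
`‖(U - V) ⊗ I‖ ≤ ‖U - V‖_F` because the operator norm is bounded by the Frobenius norm.

Measurement: for `0 ≤ M ≤ 1` the operator `2M - 1` is a contraction, and
`⟪ψ, (2M - 1) ψ⟫ = 2 ⟪ψ, M ψ⟫ - 1` on unit vectors, so `ψ ↦ re ⟪ψ, M ψ⟫` is `1`-Lipschitz on the
unit sphere. Together, `|f(U) - f(V)| ≤ ‖ψ_U - ψ_V‖ ≤ T ‖U - V‖_F`.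
-/

open WithLp
open scoped InnerProductSpace

theorem CStarRing.norm_prod_ofFn_sub_prod_ofFn_le {R : Type*} [NormedRing R] [StarRing R]
    [CStarRing R] {n : ℕ} {a b : Fin n → R} (ha : ∀ i, a i ∈ unitary R)
    (hb : ∀ i, b i ∈ unitary R) :
    ‖(List.ofFn a).prod - (List.ofFn b).prod‖ ≤ ∑ i, ‖a i - b i‖ := by
  induction n with
  | zero => simp
  | succ n ih =>
    simp only [List.ofFn_succ, List.prod_cons, Fin.sum_univ_succ]
    set P := (List.ofFn fun i => a i.succ).prod
    set Q := (List.ofFn fun i => b i.succ).prod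
    have hQ : Q ∈ unitary R :=
      list_prod_mem (by simpa [List.mem_ofFn] using fun i : Fin n => hb i.succ)
    calc ‖a 0 * P - b 0 * Q‖ = ‖a 0 * (P - Q) + (a 0 - b 0) * Q‖ := by noncomm_ring
      _ ≤ ‖P - Q‖ + ‖a 0 - b 0‖ := by
        grw [norm_add_le, CStarRing.norm_mem_unitary_mul _ (ha 0),
          CStarRing.norm_mul_mem_unitary _ hQ]
      _ ≤ ‖a 0 - b 0‖ + ∑ i : Fin n, ‖a i.succ - b i.succ‖ := by
        linarith [ih (fun i => ha i.succ) (fun i => hb i.succ)]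

theorem CStarAlgebra.norm_two_mul_sub_one_le_one {A : Type*} [CStarAlgebra A] [PartialOrder A]
    [StarOrderedRing A] {a : A} (h0 : 0 ≤ a) (h1 : a ≤ 1) : ‖2 * a - 1‖ ≤ 1 := by
  set N := 2 * a - 1
  have hN : IsSelfAdjoint N := by
    simp [N, IsSelfAdjoint, (IsSelfAdjoint.of_nonneg h0).star_eq, two_mul]
  have hsq_nonneg : 0 ≤ N * N := by simpa [hN.star_eq] using star_mul_self_nonneg N
  have hsq_le : N * N ≤ 1 := by
    have hsq : 1 - N * N = 4 • (a * (1 - a)) := by simp only [N]; noncomm_ring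
    rw [← sub_nonneg, hsq]
    exact nsmul_nonneg (((Commute.one_right a).sub_right (Commute.refl a)).mul_nonneg h0
      (sub_nonneg.2 h1)) 4
  have : ‖N‖ * ‖N‖ ≤ 1 := by
    rw [← CStarRing.norm_star_mul_self, hN.star_eq]
    exact (CStarAlgebra.norm_le_one_iff_of_nonneg _ hsq_nonneg).2 hsq_le
  nlinarith [norm_nonneg N]

theorem ContinuousLinearMap.norm_inner_map_self_sub_inner_map_self_le {𝕜 E : Type*} [RCLike 𝕜]
    [SeminormedAddCommGroup E] [InnerProductSpace 𝕜 E] (N : E →L[𝕜] E) (x y : E) :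
    ‖⟪x, N x⟫_𝕜 - ⟪y, N y⟫_𝕜‖ ≤ ‖N‖ * (‖x‖ + ‖y‖) * ‖x - y‖ :=
  calc ‖⟪x, N x⟫_𝕜 - ⟪y, N y⟫_𝕜‖ = ‖⟪x - y, N x⟫_𝕜 + ⟪y, N (x - y)⟫_𝕜‖ := by
        rw [inner_sub_left, map_sub, inner_sub_right]; ring_nf
    _ ≤ ‖x - y‖ * ‖N x‖ + ‖y‖ * ‖N (x - y)‖ :=
        (norm_add_le _ _).trans (add_le_add (norm_inner_le_norm _ _) (norm_inner_le_norm _ _))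
    _ ≤ ‖x - y‖ * (‖N‖ * ‖x‖) + ‖y‖ * (‖N‖ * ‖x - y‖) := by
        gcongr <;> exact N.le_opNorm _
    _ = ‖N‖ * (‖x‖ + ‖y‖) * ‖x - y‖ := by ring

theorem Matrix.sub_kronecker {l m n p R : Type*} [Ring R] (A B : Matrix l m R)
    (C : Matrix n p R) : (A - B) ⊗ₖ C = A ⊗ₖ C - B ⊗ₖ C := by
  ext; simp [sub_mul]

section Frobenius

attribute [local instance] Matrix.frobeniusNormedAddCommGroup

variable {d k : Type*} [Fintype d] [Fintype k]

theorem frobNorm_eq_frobenius_norm (A : Matrix d d ℂ) : frobNorm A = ‖A‖ := by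
  rw [frobNorm, frobenius_norm_def, ← Real.sqrt_eq_rpow, trace, Finset.sum_comm]
  simp [mul_apply, Complex.re_sum, ← Complex.normSq_eq_conj_mul_self, Complex.normSq_eq_norm_sq,
    -Complex.ofReal_pow]

theorem norm_toLp_eq_frobenius_norm_curry (x : d × k → ℂ) :
    ‖toLp 2 x‖ = ‖Matrix.of (Function.curry x)‖ := by
  rw [EuclideanSpace.norm_eq, frobenius_norm_def, ← Real.sqrt_eq_rpow, Fintype.sum_prod_type]
  simp

theorem norm_toLp_kronecker_one_mulVec_le [DecidableEq k] (A : Matrix d d ℂ) (x : d × k → ℂ) :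
    ‖toLp 2 ((A ⊗ₖ (1 : Matrix k k ℂ)) *ᵥ x)‖ ≤ frobNorm A * ‖toLp 2 x‖ := by
  have hcurry : Function.curry ((A ⊗ₖ (1 : Matrix k k ℂ)) *ᵥ x)
      = A * Matrix.of (Function.curry x) := by
    ext i c
    simp [mulVec, dotProduct, Fintype.sum_prod_type, one_apply, mul_apply]
  rw [norm_toLp_eq_frobenius_norm_curry, norm_toLp_eq_frobenius_norm_curry, hcurry,
    frobNorm_eq_frobenius_norm]
  exact frobenius_norm_mul _ _

end Frobenius

section L2Operator

open scoped Matrix.Norms.L2Operator MatrixOrder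

theorem Matrix.l2_opNorm_kronecker_one_le_frobNorm {d k : Type*} [Fintype d] [DecidableEq d]
    [Fintype k] [DecidableEq k] (A : Matrix d d ℂ) : ‖A ⊗ₖ (1 : Matrix k k ℂ)‖ ≤ frobNorm A :=
  ContinuousLinearMap.opNorm_le_bound _ (Real.sqrt_nonneg _) fun x =>
    norm_toLp_kronecker_one_mulVec_le A (ofLp x)

theorem abs_re_inner_toEuclideanCLM_sub_le {n : Type*} [Fintype n] [DecidableEq n]
    {M : Matrix n n ℂ} (h0 : 0 ≤ M) (h1 : M ≤ 1) {x y : EuclideanSpace ℂ n} (hxy : ‖x‖ = ‖y‖) :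
    |(⟪x, toEuclideanCLM (n := n) (𝕜 := ℂ) M x⟫_ℂ).re
      - (⟪y, toEuclideanCLM (n := n) (𝕜 := ℂ) M y⟫_ℂ).re| ≤ ‖x‖ * ‖x - y‖ := by
  set N := toEuclideanCLM (n := n) (𝕜 := ℂ) (2 * M - 1)
  have hN : ‖N‖ ≤ 1 := CStarAlgebra.norm_two_mul_sub_one_le_one h0 h1
  have hNz (z : EuclideanSpace ℂ n) :
      (⟪z, N z⟫_ℂ).re = 2 * (⟪z, toEuclideanCLM (n := n) (𝕜 := ℂ) M z⟫_ℂ).re - ‖z‖ ^ 2 := by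
    simp [N, map_ofNat, two_smul, inner_self_eq_norm_sq_to_K, ← Complex.ofReal_pow]
    ring
  have key := (Complex.abs_re_le_norm _).trans (N.norm_inner_map_self_sub_inner_map_self_le x y)
  rw [Complex.sub_re, hNz, hNz, ← hxy] at key
  have hbound : ‖N‖ * (‖x‖ + ‖x‖) * ‖x - y‖ ≤ 2 * (‖x‖ * ‖x - y‖) :=
    calc _ = ‖N‖ * (2 * (‖x‖ * ‖x - y‖)) := by ring
      _ ≤ 2 * (‖x‖ * ‖x - y‖) := mul_le_of_le_one_left (by positivity) hN
  rw [abs_le] at key ⊢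
  constructor <;> linarith [key.1, key.2]

section Algorithm

variable {d k : Type*} [Fintype d] [DecidableEq d] [Fintype k] [DecidableEq k]
  {T : ℕ} {W : ℕ → Matrix (d × k) (d × k) ℂ}

theorem algOp_mem_unitaryGroup (hW : ∀ i ≤ T, W i ∈ unitaryGroup (d × k) ℂ)
    {U : Matrix d d ℂ} (hU : U ∈ unitaryGroup d ℂ) : algOp T W U ∈ unitaryGroup (d × k) ℂ :=
  mul_mem (hW T le_rfl) <| list_prod_mem <| by
    simpa [List.mem_ofFn] using fun i : Fin T =>
      mul_mem (kronecker_mem_unitary hU (one_mem _)) (hW _ (by omega))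

theorem l2_opNorm_algOp_sub_le (hW : ∀ i ≤ T, W i ∈ unitaryGroup (d × k) ℂ)
    {U V : Matrix d d ℂ} (hU : U ∈ unitaryGroup d ℂ) (hV : V ∈ unitaryGroup d ℂ) :
    ‖algOp T W U - algOp T W V‖ ≤ T * frobNorm (U - V) := by
  have hquery {X : Matrix d d ℂ} (hX : X ∈ unitaryGroup d ℂ) (i : ℕ) (hi : i ≤ T) :
      (X ⊗ₖ (1 : Matrix k k ℂ)) * W i ∈ unitaryGroup (d × k) ℂ :=
    mul_mem (kronecker_mem_unitary hX (one_mem _)) (hW i hi)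
  rw [algOp, algOp, ← mul_sub, CStarRing.norm_mem_unitary_mul _ (hW T le_rfl)]
  calc _ ≤ ∑ i : Fin T, ‖(U ⊗ₖ (1 : Matrix k k ℂ)) * W (T - 1 - i)
            - (V ⊗ₖ (1 : Matrix k k ℂ)) * W (T - 1 - i)‖ :=
        CStarRing.norm_prod_ofFn_sub_prod_ofFn_le (fun i => hquery hU _ (by omega))
          (fun i => hquery hV _ (by omega))
    _ ≤ ∑ _i : Fin T, frobNorm (U - V) := by
        gcongr with i
        rw [← sub_mul, ← sub_kronecker, CStarRing.norm_mul_mem_unitary _ (hW _ (by omega))]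
        exact l2_opNorm_kronecker_one_le_frobNorm _
    _ = T * frobNorm (U - V) := by simp

theorem algAcceptProb_eq_re_inner (v : d × k → ℂ) (M : Matrix (d × k) (d × k) ℂ)
    (U : Matrix d d ℂ) :
    algAcceptProb T W v M U =
      (⟪toEuclideanCLM (n := d × k) (𝕜 := ℂ) (algOp T W U) (toLp 2 v),
        toEuclideanCLM (n := d × k) (𝕜 := ℂ) M
          (toEuclideanCLM (n := d × k) (𝕜 := ℂ) (algOp T W U) (toLp 2 v))⟫_ℂ).re := by
  simp [algAcceptProb, EuclideanSpace.inner_toLp_toLp, dotProduct_comm]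

end Algorithm

/-- A quantum oracle algorithm making at most `T` queries to a unitary oracle `U` has
acceptance probability `f(U) := Pr[A^U → 1]` that is `T`-Lipschitz in the Frobenius norm:
`|f(U) − f(V)| ≤ T·‖U − V‖_F` for all unitaries `U, V`. -/
theorem stmt_18 {d k : Type*} [Fintype d] [DecidableEq d] [Fintype k] [DecidableEq k]
    (T : ℕ) (W : ℕ → Matrix (d × k) (d × k) ℂ)
    (hW : ∀ i ≤ T, W i ∈ Matrix.unitaryGroup (d × k) ℂ)
    (v : d × k → ℂ) (hv : _root_.dotProduct (star v) v = 1)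
    (M : Matrix (d × k) (d × k) ℂ) (hM : M.PosSemidef)
    (hM1 : ((1 : Matrix (d × k) (d × k) ℂ) - M).PosSemidef)
    (U V : Matrix d d ℂ)
    (hU : U ∈ Matrix.unitaryGroup d ℂ) (hV : V ∈ Matrix.unitaryGroup d ℂ) :
    |algAcceptProb T W v M U - algAcceptProb T W v M V| ≤ (T : ℝ) * frobNorm (U - V) := by
  set ψ : Matrix d d ℂ → EuclideanSpace ℂ (d × k) := fun X =>
    toEuclideanCLM (n := d × k) (𝕜 := ℂ) (algOp T W X) (toLp 2 v)
  have hv1 : ‖(toLp 2 v : EuclideanSpace ℂ (d × k))‖ = 1 := by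
    rw [norm_eq_sqrt_re_inner (𝕜 := ℂ), EuclideanSpace.inner_toLp_toLp, dotProduct_comm, hv]
    simp
  have hψ {X : Matrix d d ℂ} (hX : X ∈ unitaryGroup d ℂ) : ‖ψ X‖ = 1 := by
    have := Unitary.map_mem (toEuclideanCLM (n := d × k) (𝕜 := ℂ)).toStarAlgHom
      (algOp_mem_unitaryGroup hW hX)
    exact (ContinuousLinearMap.norm_map_of_mem_unitary this _).trans hv1
  have hdist : ‖ψ U - ψ V‖ ≤ T * frobNorm (U - V) :=
    calc ‖ψ U - ψ V‖
        = ‖toEuclideanCLM (n := d × k) (𝕜 := ℂ) (algOp T W U - algOp T W V) (toLp 2 v)‖ := by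
          simp [ψ, map_sub]
      _ ≤ ‖algOp T W U - algOp T W V‖ * ‖toLp 2 v‖ := ContinuousLinearMap.le_opNorm _ _
      _ ≤ T * frobNorm (U - V) := by rw [hv1, mul_one]; exact l2_opNorm_algOp_sub_le hW hU hV
  rw [algAcceptProb_eq_re_inner, algAcceptProb_eq_re_inner]
  calc _ ≤ ‖ψ U‖ * ‖ψ U - ψ V‖ := abs_re_inner_toEuclideanCLM_sub_le hM.nonneg (le_iff.2 hM1)
          ((hψ hU).trans (hψ hV).symm)
    _ ≤ T * frobNorm (U - V) := by rw [hψ hU, one_mul]; exact hdist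

end L2Operator
end
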